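/- arXiv:2203.08915 — 2 statements merged into one kernel-verified Lean document; each statement's English description precedes it below -/
import Mathlib

section
/- Host–Kra cube parametrization is injective, and the cube group of a finite filtered abelian group has cardinality ∏_{i≥0} |G_(i)|^C(n,i): let G be a finite abelian group with a filtration G = G_(0) ⊇ G_(1) ⊇ G_(2) ⊇ ⋯ (eventually trivial). For n ≥ 0, define Φ : ∏_{S ⊆ [n]} G_(|S|) → G^({0,1}^n) by Φ((g_S)_S)(v) = Σ_{S ⊆ [n]} (∏_{i∈S} v_i) • g_S. Then Φ is an injective group homomorphism; consequently its image, the Host–Kra cube group HK^n(G_•), has cardinality ∏_{i=0}^{n} |G_(i)|^(binom(n,i)). -/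
/-!
Evaluating `hkMap Gf n g` at the indicator vector of `S` gives `∑_{T ⊆ S} g_T`, so `g_S` is
recovered from the values of the map by strong induction on `S` (Möbius inversion on the Boolean
lattice). The domain has `|G_(i)|` choices for each of the `C(n, i)` subsets of size `i`.
-/

/-- The Host–Kra parametrization map: `(g_S)_S ↦ (v ↦ Σ_S (∏_{i∈S} v_i) • g_S)`. -/
def hkMap {G : Type*} [AddCommGroup G] (Gf : ℕ → AddSubgroup G) (n : ℕ)
    (g : (S : Finset (Fin n)) → Gf S.card) : (Fin n → Bool) → G :=
  fun v => ∑ S : Finset (Fin n), if ∀ i ∈ S, v i = true then (g S : G) else 0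

open Finset

lemma Finset.prod_univ_finset_apply_card {α M : Type*} [Fintype α] [CommMonoid M] (f : ℕ → M) :
    ∏ S : Finset α, f #S =
      ∏ i ∈ range (Fintype.card α + 1), f i ^ (Fintype.card α).choose i := by
  rw [← powerset_univ, prod_powerset, card_univ]
  exact prod_congr rfl fun i _ => prod_powersetCard i univ f

section HostKra

variable {G : Type*} [AddCommGroup G] (Gf : ℕ → AddSubgroup G) (n : ℕ)

lemma hkMap_add (a b : (S : Finset (Fin n)) → Gf #S) :
    hkMap Gf n (a + b) = hkMap Gf n a + hkMap Gf n b := by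
  funext v
  simp only [hkMap, Pi.add_apply, ← sum_add_distrib]
  refine sum_congr rfl fun S _ => ?_
  split_ifs <;> simp

lemma hkMap_apply_indicator (g : (S : Finset (Fin n)) → Gf #S) (S : Finset (Fin n)) :
    hkMap Gf n g (fun i => decide (i ∈ S)) = ∑ T ∈ S.powerset, (g T : G) := by
  rw [hkMap, ← sum_filter]
  congr 1
  ext T
  simp [subset_iff]

lemma hkMap_injective : Function.Injective (hkMap Gf n) := by
  intro g g' h
  funext S
  induction S using strongInduction with
  | _ S ih =>
    have hS := congrFun h (fun i => decide (i ∈ S))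
    rw [hkMap_apply_indicator, hkMap_apply_indicator,
      ← sum_erase_add _ _ (mem_powerset_self S), ← sum_erase_add _ _ (mem_powerset_self S)] at hS
    have h_proper : ∑ T ∈ S.powerset.erase S, (g T : G) = ∑ T ∈ S.powerset.erase S, (g' T : G) :=
      sum_congr rfl fun T hT => by
        rw [mem_erase, mem_powerset] at hT
        rw [ih T (ssubset_of_subset_of_ne hT.2 hT.1)]
    rw [h_proper] at hS
    exact Subtype.ext (add_left_cancel hS)

lemma card_hkMap_domain :
    Nat.card ((S : Finset (Fin n)) → Gf #S) =
      ∏ i ∈ range (n + 1), Nat.card (Gf i) ^ n.choose i := by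
  rw [Nat.card_pi, prod_univ_finset_apply_card (fun i => Nat.card (Gf i)), Fintype.card_fin]

end HostKra

theorem hkMap_injective_addHom_card_general
    {G : Type*} [AddCommGroup G]
    (Gf : ℕ → AddSubgroup G) (n : ℕ) :
    Function.Injective (hkMap Gf n) ∧
    (∀ a b, hkMap Gf n (a + b) = hkMap Gf n a + hkMap Gf n b) ∧
    Nat.card (Set.range (hkMap Gf n)) =
      ∏ i ∈ Finset.range (n + 1), Nat.card (Gf i) ^ Nat.choose n i :=
  ⟨hkMap_injective Gf n, hkMap_add Gf n,
    (Nat.card_range_of_injective (hkMap_injective Gf n)).trans (card_hkMap_domain Gf n)⟩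

theorem hkMap_injective_addHom_card
    {G : Type*} [AddCommGroup G] [Fintype G]
    (Gf : ℕ → AddSubgroup G) (hGf0 : Gf 0 = ⊤)
    (hmono : ∀ i, Gf (i + 1) ≤ Gf i)
    (htriv : ∃ N, ∀ i, N ≤ i → Gf i = ⊥) (n : ℕ) :
    Function.Injective (hkMap Gf n) ∧
    (∀ a b, hkMap Gf n (a + b) = hkMap Gf n a + hkMap Gf n b) ∧
    Nat.card (Set.range (hkMap Gf n)) =
      ∏ i ∈ Finset.range (n + 1), Nat.card (Gf i) ^ Nat.choose n i :=
  hkMap_injective_addHom_card_general Gf n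
end

section
/- Polynomial characterization of cubes of the degree-k nilspace 𝒟_k(A): let A be an abelian group, n ≥ 0 and k ≥ 0. A function q : {0,1}^n → A satisfies the condition that for every (k+1)-element subset S = {s_1 < ⋯ < s_(k+1)} ⊆ [n] and every assignment w ∈ {0,1}^([n]∖S) of the remaining coordinates, Σ_{u ∈ {0,1}^(k+1)} (−1)^(u_1+⋯+u_(k+1)) q(ι_{S,w}(u)) = 0 (where ι_{S,w}(u) ∈ {0,1}^n has coordinate u_j at s_j and w elsewhere), if and only if there exist elements z_S ∈ A for each S ⊆ [n] with |S| ≤ k such that q(v) = Σ_{S ⊆ [n], |S| ≤ k} (∏_{i∈S} v_i) • z_S for all v ∈ {0,1}^n. -/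
/-!
Identify `{0,1}^n` with the subsets of `[n]` and expand `q` in the basis of monomials
`V ↦ [T ⊆ V]`: by Möbius inversion on the Boolean lattice, `q V = ∑_{T ⊆ V} ∂q(T)` with
`∂q(T) = ∑_{U ⊆ T} (-1)^{|T|-|U|} q(U)`. Splitting `T ⊇ S` with `|S| = k + 1` writes `∂q(T)` as a
signed sum of alternating sums of `q` over faces with free coordinates `S`, so the face condition
kills every coefficient of degree `> k`. Conversely, on a face with free coordinates `S` the
monomial `[T ⊆ V]` with `|T| < |S|` only asks the free part to contain `T ∩ S ≠ S`, and the
alternating sum over the interval `[T ∩ S, S]` vanishes.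
-/

open Finset

namespace Finset

variable {α M : Type*} [DecidableEq α]

theorem sum_Icc_neg_one_pow_card {U V : Finset α} (h : U ⊆ V) :
    ∑ T ∈ Icc U V, (-1 : ℤ) ^ #T = if U = V then (-1) ^ #U else 0 := by
  have hdisj : ∀ W ∈ (V \ U).powerset, Disjoint U W := fun W hW =>
    disjoint_of_subset_right (mem_powerset.1 hW) disjoint_sdiff
  have hinj : Set.InjOn (U ∪ ·) (V \ U).powerset := fun W hW W' hW' hWW' => by
    rw [← union_sdiff_cancel_left (hdisj W hW), ← union_sdiff_cancel_left (hdisj W' hW')]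
    exact congrArg (· \ U) hWW'
  rw [Icc_eq_image_powerset h, sum_image hinj,
    sum_congr rfl fun W hW => by rw [card_union_of_disjoint (hdisj W hW), pow_add],
    ← mul_sum, sum_powerset_neg_one_pow_card]
  have : V \ U = ∅ ↔ U = V := sdiff_eq_empty_iff_subset.trans ⟨(h.antisymm ·), (· ▸ subset_rfl)⟩
  simp only [this, mul_ite, mul_one, mul_zero]

theorem sum_powerset_union_of_disjoint [AddCommMonoid M] {s t : Finset α} (h : Disjoint s t)
    (g : Finset α → M) :
    ∑ u ∈ (s ∪ t).powerset, g u = ∑ a ∈ s.powerset, ∑ b ∈ t.powerset, g (a ∪ b) := by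
  rw [← sum_product']
  refine sum_nbij' (fun u => (u ∩ s, u ∩ t)) (fun p => p.1 ∪ p.2) ?_ ?_ ?_ ?_ ?_
  · simp
  · simp only [mem_product, mem_powerset, and_imp, Prod.forall]
    exact fun a b => union_subset_union
  · intro u hu
    simp only [mem_powerset] at hu
    simp [← inter_union_distrib_left, inter_eq_left.2 hu]
  · simp only [mem_product, mem_powerset, Prod.forall, Prod.mk.injEq]
    intro a b ⟨ha, hb⟩
    grind [disjoint_left]
  · intro u hu
    rw [← inter_union_distrib_left, inter_eq_left.2 (mem_powerset.1 hu)]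

end Finset

namespace BoolCube

variable {α A : Type*} [DecidableEq α] [AddCommGroup A]

-- The sign is `(-1) ^ #(T \ U)`, written without truncated subtraction.
def moebiusCoeff (f : Finset α → A) (T : Finset α) : A :=
  ∑ U ∈ T.powerset, (-1 : ℤ) ^ (#T + #U) • f U

/-- The alternating sum of `f` over the face with free coordinates `S` whose fixed coordinates
are given by `W` outside `S`. -/
def faceSum (f : Finset α → A) (S W : Finset α) : A :=
  ∑ U ∈ S.powerset, (-1 : ℤ) ^ #U • f (U ∪ (W \ S))

theorem sum_powerset_moebiusCoeff (f : Finset α → A) (V : Finset α) :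
    ∑ T ∈ V.powerset, moebiusCoeff f T = f V := by
  unfold moebiusCoeff
  rw [sum_comm' (t' := V.powerset) (s' := fun U => Icc U V) (by
    intro T U; simp only [mem_powerset, mem_Icc]; grind)]
  calc ∑ U ∈ V.powerset, ∑ T ∈ Icc U V, (-1 : ℤ) ^ (#T + #U) • f U
      = ∑ U ∈ V.powerset, (if U = V then 1 else 0 : ℤ) • f U := by
        refine sum_congr rfl fun U hU => ?_
        rw [← sum_smul]
        simp_rw [pow_add, ← sum_mul, sum_Icc_neg_one_pow_card (mem_powerset.1 hU)]
        split_ifs <;> simp [← pow_add, Even.neg_one_pow ⟨#U, rfl⟩]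
    _ = f V := by simp

theorem moebiusCoeff_eq_sum_faceSum (f : Finset α → A) {S T : Finset α} (h : S ⊆ T) :
    moebiusCoeff f T = ∑ W ∈ (T \ S).powerset, (-1 : ℤ) ^ (#T + #W) • faceSum f S W := by
  unfold moebiusCoeff faceSum
  conv_lhs =>
    rw [← union_sdiff_of_subset h, sum_powerset_union_of_disjoint disjoint_sdiff, sum_comm]
  refine sum_congr rfl fun W hW => ?_
  have hWS : Disjoint S W := disjoint_of_subset_right (mem_powerset.1 hW) disjoint_sdiff
  rw [smul_sum]
  refine sum_congr rfl fun U hU => ?_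
  rw [card_union_of_disjoint (disjoint_of_subset_left (mem_powerset.1 hU) hWS),
    hWS.symm.sdiff_eq_left, smul_smul, ← pow_add, union_sdiff_of_subset h]
  congr 2
  ring

theorem faceSum_sum {ι : Type*} (s : Finset ι) (g : ι → Finset α → A) (S W : Finset α) :
    faceSum (fun V => ∑ i ∈ s, g i V) S W = ∑ i ∈ s, faceSum (g i) S W := by
  simp only [faceSum, smul_sum]
  exact sum_comm

theorem faceSum_monomial_eq_zero {S T : Finset α} (hT : #T < #S) (c : A) (W : Finset α) :
    faceSum (fun V => if T ⊆ V then c else 0) S W = 0 := by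
  have hTS : T ∩ S ≠ S := fun h => (card_le_card (h ▸ inter_subset_left)).not_gt hT
  by_cases hTW : T \ S ⊆ W
  · have hmem : ∀ U ∈ S.powerset, T ⊆ U ∪ (W \ S) ↔ U ∈ Icc (T ∩ S) S := by
      intro U hU
      simp only [mem_powerset] at hU
      simp only [mem_Icc, hU, and_true, subset_iff, mem_union, mem_sdiff, mem_inter]
      grind
    calc faceSum _ S W
        = ∑ U ∈ S.powerset, if U ∈ Icc (T ∩ S) S then (-1 : ℤ) ^ #U • c else 0 :=
          sum_congr rfl fun U hU => by simp only [hmem U hU, smul_ite, smul_zero]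
      _ = (∑ U ∈ Icc (T ∩ S) S, (-1 : ℤ) ^ #U) • c := by
          rw [sum_ite_mem, sum_smul,
            inter_eq_right.2 (Iic_eq_powerset (s := S) ▸ Icc_subset_Iic_self)]
      _ = 0 := by rw [sum_Icc_neg_one_pow_card inter_subset_right, if_neg hTS, zero_smul]
  · refine sum_eq_zero fun U hU => ?_
    have hTU : ¬T ⊆ U ∪ (W \ S) := fun hsub => hTW (by grind)
    simp only [hTU, if_false, smul_zero]

theorem forall_faceSum_eq_zero_iff [Fintype α] (f : Finset α → A) (k : ℕ) :
    (∀ S : Finset α, #S = k + 1 → ∀ W, faceSum f S W = 0) ↔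
      ∃ z : Finset α → A, ∀ V,
        f V = ∑ T ∈ univ.filter (fun T : Finset α => #T ≤ k), if T ⊆ V then z T else 0 := by
  constructor
  · intro hface
    have hvanish : ∀ T, k < #T → moebiusCoeff f T = 0 := fun T hT => by
      obtain ⟨S, hST, hS⟩ := exists_subset_card_eq (Nat.succ_le_of_lt hT)
      rw [moebiusCoeff_eq_sum_faceSum f hST]
      exact sum_eq_zero fun W _ => by rw [hface S hS W, smul_zero]
    refine ⟨moebiusCoeff f, fun V => ?_⟩
    rw [← sum_filter, ← sum_powerset_moebiusCoeff f V]
    refine (sum_subset (fun T hT => ?_) fun T hT hT' => hvanish T ?_).symm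
    · exact mem_powerset.2 (mem_filter.1 hT).2
    · simpa [mem_powerset.1 hT] using hT'
  · rintro ⟨z, hz⟩ S hS W
    rw [show f = _ from funext hz, faceSum_sum]
    exact sum_eq_zero fun T hT => faceSum_monomial_eq_zero (by simp at hT; omega) _ _

variable (α) in
def boolFunEquivFinset [Fintype α] : (α → Bool) ≃ Finset α where
  toFun v := univ.filter (v · = true)
  invFun V i := decide (i ∈ V)
  left_inv v := by ext; simp
  right_inv V := by ext; simp

theorem sum_glue_eq_faceSum [Fintype α] (q : (α → Bool) → A) (S : Finset α) (w : α → Bool) :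
    ∑ u : {i // i ∈ S} → Bool, (-1 : ℤ) ^ #(univ.filter fun i => u i = true) •
        q (fun i => if h : i ∈ S then u ⟨i, h⟩ else w i) =
      faceSum (q ∘ (boolFunEquivFinset α).symm) S (boolFunEquivFinset α w) := by
  refine sum_nbij' (fun u => (univ.filter (u · = true)).map (Function.Embedding.subtype _))
    (fun U i => decide (i.1 ∈ U)) ?_ ?_ ?_ ?_ ?_
  · intro u _
    simpa [subset_iff] using fun _ h _ => h
  · simp
  · intro u _; funext i; simp
  · intro U hU
    ext i
    simpa using fun h => mem_powerset.1 hU h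
  · intro u _
    rw [card_map]
    congr 2
    funext i
    by_cases hi : i ∈ S <;> simp [hi, boolFunEquivFinset]

end BoolCube

open BoolCube

theorem cube_iff_polynomial_param_degree_k
    {A : Type*} [AddCommGroup A] (n k : ℕ)
    (q : (Fin n → Bool) → A) :
    (∀ S : Finset (Fin n), S.card = k + 1 → ∀ w : Fin n → Bool,
      ∑ u : {i : Fin n // i ∈ S} → Bool,
        ((-1 : ℤ) ^ (Finset.univ.filter fun i => u i = true).card) •
          q (fun i => if h : i ∈ S then u ⟨i, h⟩ else w i) = 0) ↔
    (∃ z : Finset (Fin n) → A, ∀ v : Fin n → Bool,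
      q v = ∑ S ∈ Finset.univ.filter (fun S : Finset (Fin n) => S.card ≤ k),
        if ∀ i ∈ S, v i = true then z S else 0) := by
  have hmono (T : Finset (Fin n)) (v : Fin n → Bool) :
      (∀ i ∈ T, v i = true) ↔ T ⊆ boolFunEquivFinset (Fin n) v := by
    simp [boolFunEquivFinset, subset_iff]
  simp only [sum_glue_eq_faceSum, hmono, (boolFunEquivFinset (Fin n)).forall_congr_left,
    Equiv.apply_symm_apply]
  exact forall_faceSum_eq_zero_iff _ k
end
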